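/- arXiv:1612.00198 — 4 statements merged into one kernel-verified Lean document; each statement's English description precedes it below -/
import Mathlib

section
/- Every Sylow 2-subgroup of the special linear group SL₂(𝔽₅) is isomorphic to the quaternion group Q₈ of order 8. -/
/-!
Since `2² = -1` in `𝔽₅`, the matrices `i = [[0, -1], [1, 0]]` and `j = [[0, 2], [2, 0]]` satisfy
the quaternion relations `i⁴ = 1`, `j² = i²`, `j i j⁻¹ = i⁻¹` and generate a copy of `Q₈` inside
`SL₂(𝔽₅)`. As `|SL₂(𝔽₅)| = 120 = 8 · 15`, this copy is a Sylow 2-subgroup, and every Sylow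
2-subgroup is conjugate, hence isomorphic, to it.
-/

open Matrix

theorem Sylow.nonempty_mulEquiv_of_injective {G H : Type*} [Group G] [Finite G] [Group H]
    {p m : ℕ} [Fact p.Prime] {f : H →* G} (hf : Function.Injective f) (hH : IsPGroup p H)
    (hG : Nat.card G = Nat.card H * m) (hm : ¬ p ∣ m) (P : Sylow p G) :
    Nonempty (P ≃* H) := by
  have : Finite H := Finite.of_injective f hf
  let e := MonoidHom.ofInjective hf
  have hindex : f.range.index = m := by
    have hcard := f.range.card_mul_index
    rw [← Nat.card_congr e.toEquiv, hG] at hcard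
    exact Nat.eq_of_mul_eq_mul_left Nat.card_pos hcard
  let Q : Sylow p G := (hH.of_equiv e).toSylow (hindex ▸ hm)
  exact ⟨(P.equiv Q).trans e.symm⟩

set_option maxRecDepth 10000 in
theorem Matrix.SpecialLinearGroup.card_fin_two_zmod_five :
    Nat.card (SpecialLinearGroup (Fin 2) (ZMod 5)) = 2 ^ 3 * 15 := by
  rw [Nat.card_eq_fintype_card]
  decide

namespace QuaternionGroup

def toSL2ZMod5 : QuaternionGroup 2 →* SpecialLinearGroup (Fin 2) (ZMod 5) where
  toFun
    | a k => ⟨!![0, -1; 1, 0], by decide⟩ ^ k.val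
    | xa k => ⟨!![0, 2; 2, 0], by decide⟩ * ⟨!![0, -1; 1, 0], by decide⟩ ^ k.val
  map_one' := by decide
  map_mul' := by decide

theorem toSL2ZMod5_injective : Function.Injective toSL2ZMod5 := by
  unfold Function.Injective
  decide

theorem card_two : Nat.card (QuaternionGroup 2) = 2 ^ 3 := by
  rw [Nat.card_eq_fintype_card, card]
  rfl

end QuaternionGroup

/-- Every Sylow 2-subgroup of `SL₂(𝔽₅)` (the binary icosahedral group of order 120)
is isomorphic to the quaternion group `Q₈` of order 8. -/
theorem sylow_two_SL2_F5_iso_quaternion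
    (P : Sylow 2 (Matrix.SpecialLinearGroup (Fin 2) (ZMod 5))) :
    Nonempty (P ≃* QuaternionGroup 2) :=
  Sylow.nonempty_mulEquiv_of_injective QuaternionGroup.toSL2ZMod5_injective
    (IsPGroup.of_card QuaternionGroup.card_two) (m := 15)
    (by rw [SpecialLinearGroup.card_fin_two_zmod_five, QuaternionGroup.card_two]) (by decide) P
end

section
/- For every odd prime p and every natural number k ≥ 1, every Sylow p-subgroup of the generalized quaternion (dicyclic) group Q_{4k} of order 4k is cyclic. -/
/-!
For odd `p`, a `p`-subgroup of `Q_{4k}` contains no element `xa i`: the odd powers of `xa i`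
are again of the form `xa j`, hence never trivial. So it lies in the cyclic subgroup generated
by `a 1`, and subgroups of cyclic groups are cyclic.
-/

namespace QuaternionGroup

variable {n : ℕ}

theorem a_pow (i : ZMod (2 * n)) (k : ℕ) : a i ^ k = a ((k : ZMod (2 * n)) * i) := by
  induction k with
  | zero => simp
  | succ k ih => rw [pow_succ, ih, a_mul_a, Nat.cast_succ, add_one_mul]

theorem a_one_zpow (z : ℤ) : (a 1 : QuaternionGroup n) ^ z = a z := by
  cases z with
  | ofNat k => simp [a_one_pow]
  | negSucc k => rw [zpow_negSucc, a_one_pow]; push_cast; rfl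

theorem a_mem_zpowers_a_one (i : ZMod (2 * n)) : a i ∈ Subgroup.zpowers (a 1) :=
  ⟨(i.cast : ℤ), by simp only [a_one_zpow, ZMod.intCast_zmod_cast]⟩

theorem xa_pow_ne_one_of_odd (i : ZMod (2 * n)) {m : ℕ} (hm : Odd m) : xa i ^ m ≠ 1 := by
  obtain ⟨j, rfl⟩ := hm
  rw [pow_succ, pow_mul, xa_sq, a_pow, a_mul_xa, one_def]
  exact nofun

theorem mem_zpowers_a_one_of_pow_eq_one {g : QuaternionGroup n} {m : ℕ} (hm : Odd m)
    (hg : g ^ m = 1) : g ∈ Subgroup.zpowers (a 1) := by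
  cases g with
  | a i => exact a_mem_zpowers_a_one i
  | xa i => exact absurd hg (xa_pow_ne_one_of_odd i hm)

theorem le_zpowers_a_one_of_isPGroup {p : ℕ} (hp : Odd p) {P : Subgroup (QuaternionGroup n)}
    (hP : IsPGroup p P) : P ≤ Subgroup.zpowers (a 1) := fun g hg ↦ by
  obtain ⟨m, hm⟩ := hP ⟨g, hg⟩
  exact mem_zpowers_a_one_of_pow_eq_one (hp.pow (n := m)) (congrArg Subtype.val hm)

end QuaternionGroup

theorem sylow_odd_quaternionGroup_isCyclic_general
    (p : ℕ) (hodd : Odd p) (k : ℕ)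
    (P : Sylow p (QuaternionGroup k)) :
    IsCyclic P :=
  Subgroup.isCyclic_of_le (QuaternionGroup.le_zpowers_a_one_of_isPGroup hodd P.isPGroup')

/-- For every odd prime `p` and every `k ≥ 1`, every Sylow `p`-subgroup of the
generalized quaternion (dicyclic) group `Q_{4k}` of order `4k` is cyclic. -/
theorem sylow_odd_quaternionGroup_isCyclic
    (p : ℕ) (hp : p.Prime) (hodd : Odd p) (k : ℕ) (hk : 1 ≤ k)
    (P : Sylow p (QuaternionGroup k)) :
    IsCyclic P :=
  sylow_odd_quaternionGroup_isCyclic_general p hodd k P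
end

section
/- Let S be a finite set, y ∈ S, let F be the free group on S, and let A = ⟨y⟩ be the cyclic subgroup of F generated by the basis element y. Then the HNN extension of F over the identity isomorphism A → A (i.e., the group obtained from F by adjoining a stable letter t with t a t⁻¹ = a for all a ∈ A) is isomorphic to the free product (ℤ × ℤ) ∗ F', where F' is the free group on S ∖ {y}. -/
/-! If `y` is a basis element, `F = ⟨y⟩ ∗ F'`. A stable letter centralizing `⟨y⟩` only interacts
with the first factor, so adjoining it turns `⟨y⟩` into `⟨y⟩ × ⟨t⟩ ≅ ℤ × ℤ` and leaves `F'`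
alone. This works for the HNN extension over the identity of any free factor `H` of a group. -/

open Monoid Subgroup
open scoped Monoid.Coprod

namespace HNNExtension

variable {G : Type*} [Group G] {A : Subgroup G}

theorem commute_t_of_refl (a : A) :
    Commute (t : HNNExtension G A A (MulEquiv.refl A)) (of (a : G)) :=
  t_mul_of a

variable {H K : Type*} [Group H] [Group K] (e : G ≃* H ∗ K)
  (hA : A.map e.toMonoidHom = (Coprod.inl : H →* H ∗ K).range)

noncomputable def toCoprodProd :
    HNNExtension G A A (MulEquiv.refl A) →* (H × Multiplicative ℤ) ∗ K :=
  lift ((Coprod.map (MonoidHom.inl _ _) (MonoidHom.id K)).comp e.toMonoidHom)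
    (Coprod.inl (MonoidHom.inr _ _ (.ofAdd 1))) fun a => by
      obtain ⟨h, hh⟩ : e a ∈ (Coprod.inl : H →* H ∗ K).range := hA ▸ mem_map_of_mem _ a.2
      simp only [MonoidHom.comp_apply, MulEquiv.coe_toMonoidHom, ← hh, Coprod.map_apply_inl,
        MulEquiv.refl_apply]
      exact ((MonoidHom.commute_inl_inr h _).symm.map
        (Coprod.inl : H × Multiplicative ℤ →* (H × Multiplicative ℤ) ∗ K)).eq

noncomputable def ofCoprodProd :
    (H × Multiplicative ℤ) ∗ K →* HNNExtension G A A (MulEquiv.refl A) :=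
  Coprod.lift
    ((of.comp (e.symm.toMonoidHom.comp Coprod.inl)).noncommCoprod (zpowersHom _ t) fun h _ =>
      ((commute_t_of_refl ⟨_, mem_map_equiv.mp (hA ▸ ⟨h, rfl⟩)⟩).zpow_left _).symm)
    (of.comp (e.symm.toMonoidHom.comp Coprod.inr))

@[simp]
theorem toCoprodProd_of (g : G) :
    toCoprodProd e hA (of g) = Coprod.map (MonoidHom.inl _ _) (MonoidHom.id K) (e g) :=
  lift_of ..

@[simp]
theorem toCoprodProd_t : toCoprodProd e hA t = Coprod.inl (MonoidHom.inr _ _ (.ofAdd 1)) :=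
  lift_t ..

@[simp]
theorem ofCoprodProd_inl (x : H × Multiplicative ℤ) :
    ofCoprodProd e hA (Coprod.inl x) = of (e.symm (Coprod.inl x.1)) * t ^ x.2.toAdd :=
  rfl

@[simp]
theorem ofCoprodProd_inr (k : K) :
    ofCoprodProd e hA (Coprod.inr k) = of (e.symm (Coprod.inr k)) :=
  Coprod.lift_apply_inr ..

theorem ofCoprodProd_comp_toCoprodProd :
    (ofCoprodProd e hA).comp (toCoprodProd e hA) = MonoidHom.id _ := by
  have hmap : (ofCoprodProd e hA).comp (Coprod.map (MonoidHom.inl _ _) (MonoidHom.id K)) =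
      of.comp e.symm.toMonoidHom := by
    ext <;> simp
  ext g
  · simpa using DFunLike.congr_fun hmap (e g)
  · simp

theorem toCoprodProd_comp_ofCoprodProd :
    (toCoprodProd e hA).comp (ofCoprodProd e hA) = MonoidHom.id _ := by
  ext x
  · simp only [MonoidHom.comp_apply, ofCoprodProd_inl, map_mul, map_zpow, toCoprodProd_of,
      toCoprodProd_t, MulEquiv.apply_symm_apply, Coprod.map_apply_inl, MonoidHom.id_apply]
    rw [← map_zpow, ← map_mul]
    congr 1
    ext <;> simp
  · simp

noncomputable def equivCoprodProd :
    HNNExtension G A A (MulEquiv.refl A) ≃* (H × Multiplicative ℤ) ∗ K :=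
  (toCoprodProd e hA).toMulEquiv (ofCoprodProd e hA) (ofCoprodProd_comp_toCoprodProd e hA)
    (toCoprodProd_comp_ofCoprodProd e hA)

end HNNExtension

namespace FreeGroup

variable {S : Type*} [DecidableEq S] (y : S)

noncomputable def equivCoprodOfNe : FreeGroup S ≃* Multiplicative ℤ ∗ FreeGroup {s // s ≠ y} :=
  MonoidHom.toMulEquiv
    (FreeGroup.lift fun s => if h : s = y then Coprod.inl (.ofAdd 1) else Coprod.inr (of ⟨s, h⟩))
    (Coprod.lift (zpowersHom _ (of y)) (FreeGroup.map Subtype.val))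
    (ext_hom _ _ fun s => by by_cases h : s = y <;> simp [h])
    (Coprod.hom_ext (MonoidHom.ext_mint (by simp)) (ext_hom _ _ fun s => by simp [s.2]))

@[simp]
theorem equivCoprodOfNe_of_self : equivCoprodOfNe y (of y) = Coprod.inl (.ofAdd 1) := by
  simp [equivCoprodOfNe]

theorem map_zpowers_of_self_equivCoprodOfNe :
    (zpowers (of y)).map (equivCoprodOfNe y).toMonoidHom =
      (Coprod.inl : Multiplicative ℤ →* Multiplicative ℤ ∗ FreeGroup {s // s ≠ y}).range := by
  rw [MonoidHom.map_zpowers, MulEquiv.coe_toMonoidHom, equivCoprodOfNe_of_self,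
    ← range_zpowersHom]
  congr 1
  exact MonoidHom.ext_mint (by simp)

end FreeGroup

theorem hnn_over_identity_of_basis_element_general
    (S : Type*) (y : S) :
    Nonempty
      (HNNExtension (FreeGroup S)
          (Subgroup.zpowers (FreeGroup.of y)) (Subgroup.zpowers (FreeGroup.of y))
          (MulEquiv.refl _) ≃*
        Monoid.Coprod (Multiplicative (ℤ × ℤ)) (FreeGroup {s : S // s ≠ y})) := by
  classical
  exact ⟨(HNNExtension.equivCoprodProd _ (FreeGroup.map_zpowers_of_self_equivCoprodOfNe y)).trans
    (MulEquiv.coprodCongr (MulEquiv.prodMultiplicative ℤ ℤ).symm (MulEquiv.refl _))⟩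

/-- Let `S` be a finite set, `y ∈ S`, `F` the free group on `S`, and `A = ⟨y⟩` the
cyclic subgroup generated by the basis element `y`.  The HNN extension of `F` over
the identity isomorphism `A → A` is isomorphic to the free product
`(ℤ × ℤ) ∗ F'`, where `F'` is the free group on `S ∖ {y}`. -/
theorem hnn_over_identity_of_basis_element
    (S : Type*) [Finite S] (y : S) :
    Nonempty
      (HNNExtension (FreeGroup S)
          (Subgroup.zpowers (FreeGroup.of y)) (Subgroup.zpowers (FreeGroup.of y))
          (MulEquiv.refl _) ≃*
        Monoid.Coprod (Multiplicative (ℤ × ℤ)) (FreeGroup {s : S // s ≠ y})) :=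
  hnn_over_identity_of_basis_element_general S y
end

section
/- Let S be a finite set, let y₁ ≠ y₂ be two distinct elements of S, let F be the free group on S, and let φ : ⟨y₁⟩ → ⟨y₂⟩ be the isomorphism between the cyclic subgroups of F generated by the basis elements y₁ and y₂ sending y₁ to y₂. Then the HNN extension of F over φ is a free group; in fact it is isomorphic to the free group on the set (S ∖ {y₂}) ⊔ {t}, where t denotes the stable letter. -/
/-!
The relation `t y₁ t⁻¹ = y₂` expresses `y₂` through the other generators, so `y₂` can be
eliminated (a Tietze transformation): substituting `t y₁ t⁻¹` for `y₂` gives a map to the free group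
on `(S ∖ {y₂}) ⊔ {t}`, which respects the HNN relation because `φ` is determined by `φ y₁ = y₂`,
and which is inverse to the obvious map back.
-/

open Subgroup

theorem SemiconjBy.map_zpowers_mulEquiv {G H : Type*} [Group G] [Group H] {a b : G}
    {φ : zpowers a ≃* zpowers b} (hφ : (φ ⟨a, mem_zpowers a⟩ : G) = b)
    (f : G →* H) {t : H} (ht : SemiconjBy t (f a) (f b)) (x : zpowers a) :
    SemiconjBy t (f x) (f (φ x)) := by
  obtain ⟨k, hk⟩ := mem_zpowers_iff.mp x.2
  obtain rfl : x = ⟨a, mem_zpowers a⟩ ^ k := Subtype.ext hk.symm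
  simpa [hφ] using ht.zpow_right k

namespace HNNExtension

variable {S : Type*} [DecidableEq S] {y₁ y₂ : S} (hy : y₁ ≠ y₂)

def substConj : FreeGroup S →* FreeGroup ({s : S // s ≠ y₂} ⊕ Unit) :=
  FreeGroup.lift fun s => if h : s = y₂ then
    FreeGroup.of (.inr ()) * FreeGroup.of (.inl ⟨y₁, hy⟩) * (FreeGroup.of (.inr ()))⁻¹
  else FreeGroup.of (.inl ⟨s, h⟩)

theorem substConj_of_of_ne {s : S} (hs : s ≠ y₂) :
    substConj hy (FreeGroup.of s) = FreeGroup.of (.inl ⟨s, hs⟩) := by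
  simp [substConj, hs]

theorem substConj_of_eliminated : substConj hy (FreeGroup.of y₂) =
    FreeGroup.of (.inr ()) * FreeGroup.of (.inl ⟨y₁, hy⟩) * (FreeGroup.of (.inr ()))⁻¹ := by
  simp [substConj]

theorem semiconjBy_substConj :
    SemiconjBy (FreeGroup.of (.inr ())) (substConj hy (FreeGroup.of y₁))
      (substConj hy (FreeGroup.of y₂)) := by
  simp [SemiconjBy, substConj_of_of_ne hy hy, substConj_of_eliminated]

variable (φ : zpowers (FreeGroup.of y₁) ≃* zpowers (FreeGroup.of y₂))
  (hφ : (φ ⟨FreeGroup.of y₁, mem_zpowers _⟩ : FreeGroup S) = FreeGroup.of y₂)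

def toFreeGroup :
    HNNExtension (FreeGroup S) (zpowers (FreeGroup.of y₁)) (zpowers (FreeGroup.of y₂)) φ →*
      FreeGroup ({s : S // s ≠ y₂} ⊕ Unit) :=
  lift (substConj hy) (FreeGroup.of (.inr ()))
    fun x => (SemiconjBy.map_zpowers_mulEquiv hφ _ (semiconjBy_substConj hy) x).eq

omit [DecidableEq S] in
variable {φ} in
def ofFreeGroup : FreeGroup ({s : S // s ≠ y₂} ⊕ Unit) →*
    HNNExtension (FreeGroup S) (zpowers (FreeGroup.of y₁)) (zpowers (FreeGroup.of y₂)) φ :=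
  FreeGroup.lift (Sum.elim (fun s => of (FreeGroup.of s.1)) fun _ => t)

theorem ofFreeGroup_comp_toFreeGroup :
    ofFreeGroup.comp (toFreeGroup hy φ hφ) = MonoidHom.id _ := by
  refine hom_ext (FreeGroup.ext_hom _ _ fun s => ?_) (by simp [toFreeGroup, ofFreeGroup])
  by_cases hs : s = y₂
  · subst hs
    have hconj := (equiv_eq_conj (φ := φ) ⟨FreeGroup.of y₁, mem_zpowers _⟩).symm
    rw [hφ] at hconj
    simpa [toFreeGroup, substConj_of_eliminated, ofFreeGroup] using hconj
  · simp [toFreeGroup, substConj_of_of_ne hy hs, ofFreeGroup]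

theorem toFreeGroup_comp_ofFreeGroup :
    (toFreeGroup hy φ hφ).comp ofFreeGroup = MonoidHom.id _ := by
  ext (s | u)
  · simp [toFreeGroup, ofFreeGroup, substConj_of_of_ne hy s.2]
  · simp [toFreeGroup, ofFreeGroup]

def equivFreeGroup :
    HNNExtension (FreeGroup S) (zpowers (FreeGroup.of y₁)) (zpowers (FreeGroup.of y₂)) φ ≃*
      FreeGroup ({s : S // s ≠ y₂} ⊕ Unit) :=
  MonoidHom.toMulEquiv (toFreeGroup hy φ hφ) ofFreeGroup
    (ofFreeGroup_comp_toFreeGroup hy φ hφ) (toFreeGroup_comp_ofFreeGroup hy φ hφ)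

end HNNExtension

theorem hnn_conjugating_distinct_basis_elements_isFree_general
    (S : Type*) (y₁ y₂ : S) (hy : y₁ ≠ y₂)
    (φ : Subgroup.zpowers (FreeGroup.of y₁) ≃* Subgroup.zpowers (FreeGroup.of y₂))
    (hφ : (φ ⟨FreeGroup.of y₁, Subgroup.mem_zpowers _⟩ : FreeGroup S) = FreeGroup.of y₂) :
    Nonempty
      (HNNExtension (FreeGroup S)
          (Subgroup.zpowers (FreeGroup.of y₁)) (Subgroup.zpowers (FreeGroup.of y₂)) φ ≃*
        FreeGroup ({s : S // s ≠ y₂} ⊕ Unit)) := by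
  classical
  exact ⟨HNNExtension.equivFreeGroup hy φ hφ⟩

/-- Let `S` be a finite set, `y₁ ≠ y₂` two distinct elements of `S`, `F` the free
group on `S`, and `φ : ⟨y₁⟩ → ⟨y₂⟩` the isomorphism of cyclic subgroups sending
`y₁` to `y₂`.  The HNN extension of `F` over `φ` is a free group: it is isomorphic
to the free group on `(S ∖ {y₂}) ⊔ {t}`, where `t` is the stable letter. -/
theorem hnn_conjugating_distinct_basis_elements_isFree
    (S : Type*) [Finite S] (y₁ y₂ : S) (hy : y₁ ≠ y₂)
    (φ : Subgroup.zpowers (FreeGroup.of y₁) ≃* Subgroup.zpowers (FreeGroup.of y₂))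
    (hφ : (φ ⟨FreeGroup.of y₁, Subgroup.mem_zpowers _⟩ : FreeGroup S) = FreeGroup.of y₂) :
    Nonempty
      (HNNExtension (FreeGroup S)
          (Subgroup.zpowers (FreeGroup.of y₁)) (Subgroup.zpowers (FreeGroup.of y₂)) φ ≃*
        FreeGroup ({s : S // s ≠ y₂} ⊕ Unit)) :=
  hnn_conjugating_distinct_basis_elements_isFree_general S y₁ y₂ hy φ hφ
end
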